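/- If f : A = ∏_{i∈I} A_i → B is a surjective homomorphism of algebras over a commutative unital ring R, and B has chain condition on almost direct factors (every ascending chain of almost direct factors of B terminates), then there exist finitely many ultrafilters U_0, …, U_{n-1} on I such that the composite map A → B → B/Z(B) factors through the natural map A → A/U_0 × … × A/U_{n-1}. -/
import Mathlib

universe u


/-- The setoid on a dependent product given by a filter. -/
def redSetoid {I : Type u} (F : Filter I) (A : I → Type u) : Setoid (∀ i, A i) where
  r a b := {i | a i = b i} ∈ F
  iseqv := by
    refine ⟨fun a => ?_, fun {a b} h => ?_, fun {a b c} h₁ h₂ => ?_⟩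
    · simp
    · simpa [eq_comm] using h
    · exact Filter.mem_of_superset (Filter.inter_mem h₁ h₂)
        (fun i hi => hi.1.trans hi.2)

/-- The reduced product of a family of sets with respect to a filter. -/
def ReducedProduct {I : Type u} (F : Filter I) (A : I → Type u) : Type u :=
  Quotient (redSetoid F A)

/-- The canonical quotient map onto a reduced product. -/
def reducedMk {I : Type u} (F : Filter I) (A : I → Type u) (a : ∀ i, A i) :
    ReducedProduct F A :=
  Quotient.mk (redSetoid F A) a

lemma reducedMk_eq {I : Type u} {F : Filter I} {A : I → Type u} {a b : ∀ i, A i}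
    (h : reducedMk F A a = reducedMk F A b) : {i | a i = b i} ∈ F :=
  Quotient.exact h

set_option linter.unusedSectionVars false


section AlmostDirectFactors

variable (R : Type u) (B : Type u) [CommRing R] [NonUnitalNonAssocRing B]
  [Module R B] [SMulCommClass R B B] [IsScalarTower R B B]

/-- The total annihilator ideal `Z(B) = {x | xB = Bx = 0}` of a (nonunital,
nonassociative) `R`-algebra, as an `R`-submodule. -/
def totalAnnihilator : Submodule R B where
  carrier := {x | ∀ y : B, x * y = 0 ∧ y * x = 0}
  zero_mem' := fun y => ⟨zero_mul y, mul_zero y⟩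
  add_mem' := by
    intro a b ha hb y
    exact ⟨by rw [add_mul, (ha y).1, (hb y).1, add_zero],
           by rw [mul_add, (ha y).2, (hb y).2, add_zero]⟩
  smul_mem' := by
    intro c x hx y
    exact ⟨by rw [smul_mul_assoc, (hx y).1, smul_zero],
           by rw [mul_smul_comm, (hx y).2, smul_zero]⟩

/-- A submodule of an `R`-algebra is a (two-sided) ideal if it is closed under
multiplication by arbitrary elements of the algebra on either side. -/
def IsAlgIdeal (S : Submodule R B) : Prop :=
  ∀ x ∈ S, ∀ b : B, x * b ∈ S ∧ b * x ∈ S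

/-- Ideals `B₀, B₁` form a pair of almost direct factors of `B` if they sum to
`B` and each is the two-sided annihilator of the other. -/
def IsAlmostDirectFactorPair (B₀ B₁ : Submodule R B) : Prop :=
  IsAlgIdeal R B B₀ ∧ IsAlgIdeal R B B₁ ∧ B₀ ⊔ B₁ = ⊤ ∧
    (B₀ : Set B) = {x | ∀ y ∈ B₁, x * y = 0 ∧ y * x = 0} ∧
    (B₁ : Set B) = {x | ∀ y ∈ B₀, x * y = 0 ∧ y * x = 0}

/-- An almost direct factor of `B`. -/
def IsAlmostDirectFactor (B₀ : Submodule R B) : Prop :=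
  ∃ B₁, IsAlmostDirectFactorPair R B B₀ B₁

end AlmostDirectFactors



section Aux

attribute [local instance] Classical.propDecidable

variable {R : Type u} [CommRing R] {I : Type u} {A : I → Type u}
  [∀ i, NonUnitalNonAssocRing (A i)] [∀ i, Module R (A i)]
  [∀ i, SMulCommClass R (A i) (A i)] [∀ i, IsScalarTower R (A i) (A i)]
  {B : Type u} [NonUnitalNonAssocRing B] [Module R B] [SMulCommClass R B B]
  [IsScalarTower R B B]
  (f : (∀ i, A i) →ₙₐ[R] B)

/-- Restriction of a tuple to a subset of the index set. -/
noncomputable def restr (S : Set I) (a : ∀ i, A i) : ∀ i, A i :=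
  fun i => if i ∈ S then a i else 0

lemma restr_apply_not_mem (S : Set I) {a : ∀ i, A i} {i : I} (h : i ∉ S) :
    restr S a i = 0 := if_neg h

lemma restr_apply_mem (S : Set I) {a : ∀ i, A i} {i : I} (h : i ∈ S) :
    restr S a i = a i := if_pos h

lemma restr_add (S : Set I) (a : ∀ i, A i) : restr S a + restr Sᶜ a = a := by
  funext i
  show restr S a i + restr Sᶜ a i = a i
  by_cases h : i ∈ S
  · rw [restr_apply_mem S h, restr_apply_not_mem Sᶜ (by simpa using h), add_zero]
  · rw [restr_apply_not_mem S h, restr_apply_mem Sᶜ h, zero_add]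

lemma disj_mul {S : Set I} {a c : ∀ i, A i} (ha : ∀ i ∉ S, a i = 0)
    (hc : ∀ i ∈ S, c i = 0) : f a * f c = 0 := by
  rw [← map_mul]
  have h : a * c = 0 := by
    funext i
    show a i * c i = 0
    by_cases h : i ∈ S
    · rw [hc i h, mul_zero]
    · rw [ha i h, zero_mul]
  rw [h, map_zero]

/-- The two-sided annihilator of the set of images of tuples supported in `S`. -/
def annC (S : Set I) : Submodule R B where
  carrier := {x | ∀ a : ∀ i, A i, (∀ i ∉ S, a i = 0) → x * f a = 0 ∧ f a * x = 0}
  zero_mem' := fun a _ => ⟨zero_mul _, mul_zero _⟩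
  add_mem' := fun hx hy a ha => ⟨by rw [add_mul, (hx a ha).1, (hy a ha).1, add_zero],
    by rw [mul_add, (hx a ha).2, (hy a ha).2, add_zero]⟩
  smul_mem' := fun c x hx a ha => ⟨by rw [smul_mul_assoc, (hx a ha).1, smul_zero],
    by rw [mul_smul_comm, (hx a ha).2, smul_zero]⟩

lemma mem_annC {S : Set I} {x : B} :
    x ∈ annC f S ↔ ∀ a : ∀ i, A i, (∀ i ∉ S, a i = 0) → x * f a = 0 ∧ f a * x = 0 :=
  Iff.rfl

lemma mem_annC_of_supp {S : Set I} {a : ∀ i, A i} (ha : ∀ i ∈ S, a i = 0) :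
    f a ∈ annC f S := by
  intro c hc
  constructor
  · exact disj_mul f (S := Sᶜ) (fun i hi => ha i (by simpa using hi)) (fun i hi => hc i hi)
  · exact disj_mul f (S := S) hc ha

lemma annC_antitone {S T : Set I} (h : S ⊆ T) : annC f T ≤ annC f S :=
  fun _ hx a ha => hx a (fun i hi => ha i (fun h' => hi (h h')))

lemma four_split (S : Set I) (e c : ∀ i, A i) :
    f e * f c = f (restr S e) * f (restr S c) + f (restr Sᶜ e) * f (restr Sᶜ c) := by
  have h1 : f (restr S e) * f (restr Sᶜ c) = 0 :=
    disj_mul f (fun i hi => restr_apply_not_mem S hi)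
      (fun i hi => restr_apply_not_mem Sᶜ (by simpa using hi))
  have h2 : f (restr Sᶜ e) * f (restr S c) = 0 :=
    disj_mul f (S := Sᶜ) (fun i hi => restr_apply_not_mem Sᶜ hi)
      (fun i hi => restr_apply_not_mem S (by simpa using hi))
  conv_lhs => rw [← restr_add S e, ← restr_add S c]
  rw [map_add, map_add, add_mul, mul_add, mul_add, h1, h2, add_zero, zero_add]

lemma T1_left {S : Set I} {e : ∀ i, A i} (hx : f e ∈ annC f S) (c : ∀ i, A i) :
    f (restr S e) * f (restr S c) = 0 := by
  have h := (hx (restr S c) (fun i hi => restr_apply_not_mem S hi)).1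
  have he : f e = f (restr S e) + f (restr Sᶜ e) := by rw [← map_add, restr_add]
  have h2 : f (restr Sᶜ e) * f (restr S c) = 0 :=
    disj_mul f (S := Sᶜ) (fun i hi => restr_apply_not_mem Sᶜ hi)
      (fun i hi => restr_apply_not_mem S (by simpa using hi))
  rw [he, add_mul, h2, add_zero] at h
  exact h

lemma T1_right {S : Set I} {e : ∀ i, A i} (hx : f e ∈ annC f S) (c : ∀ i, A i) :
    f (restr S c) * f (restr S e) = 0 := by
  have h := (hx (restr S c) (fun i hi => restr_apply_not_mem S hi)).2
  have he : f e = f (restr S e) + f (restr Sᶜ e) := by rw [← map_add, restr_add]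
  have h2 : f (restr S c) * f (restr Sᶜ e) = 0 :=
    disj_mul f (S := S) (fun i hi => restr_apply_not_mem S hi)
      (fun i hi => restr_apply_not_mem Sᶜ (by simpa using hi))
  rw [he, mul_add, h2, add_zero] at h
  exact h

lemma mul_reduce {S : Set I} {e : ∀ i, A i} (hx : f e ∈ annC f S) (c : ∀ i, A i) :
    f e * f c = f (restr Sᶜ e * restr Sᶜ c) := by
  rw [four_split f S e c, T1_left f hx c, zero_add, map_mul]

lemma mul_reduce' {S : Set I} {e : ∀ i, A i} (hx : f e ∈ annC f S) (c : ∀ i, A i) :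
    f c * f e = f (restr Sᶜ c * restr Sᶜ e) := by
  rw [four_split f S c e, T1_right f hx c, zero_add, map_mul]

lemma annC_ideal (hf : Function.Surjective f) (S : Set I) :
    IsAlgIdeal R B (annC f S) := by
  intro x hx b
  obtain ⟨e, rfl⟩ := hf x
  obtain ⟨c, rfl⟩ := hf b
  have hsupp : ∀ (u v : ∀ i, A i), ∀ i ∈ S, (restr Sᶜ u * restr Sᶜ v) i = 0 := by
    intro u v i hi
    show restr Sᶜ u i * restr Sᶜ v i = 0
    rw [restr_apply_not_mem Sᶜ (by simpa using hi), zero_mul]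
  constructor
  · rw [mul_reduce f hx c]
    exact mem_annC_of_supp f (hsupp e c)
  · rw [mul_reduce' f hx c]
    exact mem_annC_of_supp f (hsupp c e)

lemma annC_sup (hf : Function.Surjective f) (S : Set I) :
    annC f S ⊔ annC f Sᶜ = ⊤ := by
  rw [eq_top_iff]
  rintro x -
  obtain ⟨e, rfl⟩ := hf x
  rw [← restr_add S e, map_add]
  refine Submodule.add_mem _ (Submodule.mem_sup_right ?_) (Submodule.mem_sup_left ?_)
  · exact mem_annC_of_supp f (fun i hi => restr_apply_not_mem S (by simpa using hi))
  · exact mem_annC_of_supp f (fun i hi => restr_apply_not_mem Sᶜ (by simpa using hi))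

lemma annC_eq_ann (hf : Function.Surjective f) (S : Set I) :
    (annC f S : Set B) = {x | ∀ y ∈ annC f Sᶜ, x * y = 0 ∧ y * x = 0} := by
  ext x
  simp only [SetLike.mem_coe, Set.mem_setOf_eq]
  constructor
  · intro hx y hy
    obtain ⟨e, rfl⟩ := hf x
    obtain ⟨c, rfl⟩ := hf y
    constructor
    · rw [four_split f S e c, T1_left f hx c, zero_add]
      exact T1_right f (S := Sᶜ) hy e
    · rw [four_split f S c e, T1_right f hx c, zero_add]
      exact T1_left f (S := Sᶜ) hy e
  · intro hx
    rw [mem_annC]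
    intro a ha
    have h : f a ∈ annC f Sᶜ := mem_annC_of_supp f (fun i hi => ha i hi)
    exact hx (f a) h

lemma annC_pair (hf : Function.Surjective f) (S : Set I) :
    IsAlmostDirectFactorPair R B (annC f S) (annC f Sᶜ) :=
  ⟨annC_ideal f hf S, annC_ideal f hf Sᶜ, annC_sup f hf S, annC_eq_ann f hf S, by
    rw [annC_eq_ann f hf Sᶜ, compl_compl]⟩

lemma annC_adf (hf : Function.Surjective f) (S : Set I) :
    IsAlmostDirectFactor R B (annC f S) :=
  ⟨_, annC_pair f hf S⟩


/-- `S` is a null set: everything supported on `S` maps into the total annihilator. -/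
def nul (S : Set I) : Prop :=
  ∀ a : ∀ i, A i, (∀ i ∉ S, a i = 0) → ∀ y : B, f a * y = 0 ∧ y * f a = 0

lemma nul_mono {S T : Set I} (h : T ⊆ S) (hS : nul f S) : nul f T :=
  fun a ha => hS a (fun i hi => ha i (fun h' => hi (h h')))

lemma nul_empty : nul f (∅ : Set I) := by
  intro a ha y
  have h : a = 0 := funext fun i => ha i (Set.notMem_empty i)
  rw [h, map_zero]
  exact ⟨zero_mul y, mul_zero y⟩

lemma nul_union {S T : Set I} (hS : nul f S) (hT : nul f T) : nul f (S ∪ T) := by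
  intro a ha y
  have hdecomp : f a = f (restr S a) + f (restr Sᶜ a) := by rw [← map_add, restr_add]
  have h1 := hS (restr S a) (fun i hi => restr_apply_not_mem S hi) y
  have h2 : ∀ i ∉ T, restr Sᶜ a i = 0 := by
    intro i hi
    by_cases h : i ∈ S
    · exact restr_apply_not_mem Sᶜ (by simpa using h)
    · rw [restr_apply_mem Sᶜ h]
      exact ha i (fun hm => hm.elim h hi)
  have h3 := hT (restr Sᶜ a) h2 y
  constructor
  · rw [hdecomp, add_mul, h1.1, h3.1, add_zero]
  · rw [hdecomp, mul_add, h1.2, h3.2, add_zero]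

lemma nul_iUnion (n : ℕ) (Q : Fin n → Set I) (hQ : ∀ m, nul f (Q m)) :
    nul f (⋃ m, Q m) := by
  induction n with
  | zero => exact nul_mono f (by simp) (nul_empty f)
  | succ k ih =>
    have h1 : nul f (⋃ m : Fin k, Q m.castSucc) := ih _ (fun m => hQ _)
    refine nul_mono f ?_ (nul_union f h1 (hQ (Fin.last k)))
    intro i hi
    obtain ⟨m, hm⟩ := Set.mem_iUnion.1 hi
    rcases Fin.eq_castSucc_or_eq_last m with ⟨j, rfl⟩ | rfl
    · exact Or.inl (Set.mem_iUnion.2 ⟨j, hm⟩)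
    · exact Or.inr hm

lemma nul_strict (hf : Function.Surjective f) {S T : Set I} (hST : S ⊆ T)
    (heq : annC f S = annC f T) : nul f (T \ S) := by
  intro a ha y
  have haS : ∀ i ∉ T, a i = 0 := fun i hi => ha i (fun hcon => hi hcon.1)
  have h1 : f a ∈ annC f T := by
    rw [← heq]
    exact mem_annC_of_supp f (fun i hi => ha i (fun hcon => hcon.2 hi))
  obtain ⟨c, rfl⟩ := hf y
  have hdecomp : f c = f (restr T c) + f (restr Tᶜ c) := by rw [← map_add, restr_add]
  have h2 := h1 (restr T c) (fun i hi => restr_apply_not_mem T hi)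
  have h3 : f a * f (restr Tᶜ c) = 0 :=
    disj_mul f (S := T) haS (fun i hi => restr_apply_not_mem Tᶜ (by simpa using hi))
  have h4 : f (restr Tᶜ c) * f a = 0 :=
    disj_mul f (S := Tᶜ) (fun i hi => restr_apply_not_mem Tᶜ hi) (fun i hi => haS i hi)
  constructor
  · rw [hdecomp, mul_add, h2.1, h3, add_zero]
  · rw [hdecomp, add_mul, h2.2, h4, add_zero]

lemma exists_atom (hf : Function.Surjective f)
    (hcc : ∀ c : ℕ → Submodule R B, Monotone c →
      (∀ j, IsAlmostDirectFactor R B (c j)) → ∃ N, ∀ j ≥ N, c j = c N)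
    {S : Set I} (hS : ¬ nul f S) :
    ∃ P, P ⊆ S ∧ ¬ nul f P ∧ ∀ T, nul f (P ∩ T) ∨ nul f (P \ T) := by
  by_contra hcon
  push_neg at hcon
  have hcon' : ∀ P : Set I, ∃ T, P ⊆ S → ¬ nul f P →
      ¬ nul f (P ∩ T) ∧ ¬ nul f (P \ T) := by
    intro P
    by_cases h : P ⊆ S ∧ ¬ nul f P
    · obtain ⟨T, hT1, hT2⟩ := hcon P h.1 h.2
      exact ⟨T, fun _ _ => ⟨hT1, hT2⟩⟩
    · exact ⟨∅, fun h1 h2 => absurd ⟨h1, h2⟩ h⟩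
  choose T hT using hcon'
  set Rc : ℕ → Set I := fun k => (fun P => P ∩ T P)^[k] S with hRc
  have hsucc : ∀ k, Rc (k + 1) = Rc k ∩ T (Rc k) := by
    intro k
    rw [hRc]
    exact Function.iterate_succ_apply' _ _ _
  have hzero : Rc 0 = S := rfl
  have hinv : ∀ k, Rc k ⊆ S ∧ ¬ nul f (Rc k) := by
    intro k
    induction k with
    | zero => exact ⟨subset_rfl, hS⟩
    | succ k ih =>
      have h := hT (Rc k) ih.1 ih.2
      rw [hsucc k]
      exact ⟨Set.inter_subset_left.trans ih.1, h.1⟩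
  have hmono : Monotone (fun k => annC f (Rc k)) :=
    monotone_nat_of_le_succ (fun k => annC_antitone f (by
      rw [hsucc k]; exact Set.inter_subset_left))
  obtain ⟨N, hN⟩ := hcc _ hmono (fun k => annC_adf f hf (Rc k))
  have heq : annC f (Rc (N + 1)) = annC f (Rc N) := hN (N + 1) (Nat.le_succ N)
  have hsub : Rc (N + 1) ⊆ Rc N := by rw [hsucc N]; exact Set.inter_subset_left
  have hstr := nul_strict f hf hsub heq
  have hdiff : Rc N \ Rc (N + 1) = Rc N \ T (Rc N) := by
    rw [hsucc N]
    ext i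
    simp only [Set.mem_diff, Set.mem_inter_iff]
    tauto
  rw [hdiff] at hstr
  exact (hT (Rc N) (hinv N).1 (hinv N).2).2 hstr

lemma exists_atoms_cover (hf : Function.Surjective f)
    (hcc : ∀ c : ℕ → Submodule R B, Monotone c →
      (∀ j, IsAlmostDirectFactor R B (c j)) → ∃ N, ∀ j ≥ N, c j = c N) :
    ∃ (n : ℕ) (P : Fin n → Set I),
      (∀ m, ¬ nul f (P m) ∧ ∀ T, nul f (P m ∩ T) ∨ nul f (P m \ T)) ∧
      nul f ((⋃ m, P m)ᶜ) := by
  by_contra hcon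
  push_neg at hcon
  have hpick : ∀ Q : Set I, ∃ p : Set I, ¬ nul f Qᶜ →
      p ⊆ Qᶜ ∧ ¬ nul f p ∧ ∀ T, nul f (p ∩ T) ∨ nul f (p \ T) := by
    intro Q
    by_cases h : ¬ nul f Qᶜ
    · obtain ⟨p, h1, h2, h3⟩ := exists_atom f hf hcc h
      exact ⟨p, fun _ => ⟨h1, h2, h3⟩⟩
    · exact ⟨∅, fun h' => absurd h' h⟩
  choose pick hpick' using hpick
  set Sf : ℕ → Set I := fun k => (fun Q => Q ∪ pick Q)^[k] ∅ with hSf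
  have hsucc : ∀ k, Sf (k + 1) = Sf k ∪ pick (Sf k) := by
    intro k
    rw [hSf]
    exact Function.iterate_succ_apply' _ _ _
  have hinv : ∀ k, ∃ P : Fin k → Set I,
      (∀ m, ¬ nul f (P m) ∧ ∀ T, nul f (P m ∩ T) ∨ nul f (P m \ T)) ∧
      Sf k = ⋃ m, P m := by
    intro k
    induction k with
    | zero =>
      refine ⟨fun m => m.elim0, fun m => m.elim0, ?_⟩
      rw [Set.iUnion_of_empty]
      rfl
    | succ k ih =>
      obtain ⟨P, hP, hSk⟩ := ih
      have hnn : ¬ nul f (Sf k)ᶜ := by rw [hSk]; exact hcon k P hP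
      have hp := hpick' (Sf k) hnn
      refine ⟨Fin.snoc P (pick (Sf k)), ?_, ?_⟩
      · intro m
        refine Fin.lastCases ?_ ?_ m
        · rw [Fin.snoc_last]
          exact ⟨hp.2.1, hp.2.2⟩
        · intro j
          rw [Fin.snoc_castSucc]
          exact hP j
      · rw [hsucc k, hSk]
        ext i
        simp only [Set.mem_union, Set.mem_iUnion]
        constructor
        · rintro (⟨m, hm⟩ | hm)
          · exact ⟨m.castSucc, by rwa [Fin.snoc_castSucc]⟩
          · exact ⟨Fin.last k, by rwa [Fin.snoc_last]⟩
        · rintro ⟨m, hm⟩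
          rcases Fin.eq_castSucc_or_eq_last m with ⟨j, rfl⟩ | rfl
          · rw [Fin.snoc_castSucc] at hm
            exact Or.inl ⟨j, hm⟩
          · rw [Fin.snoc_last] at hm
            exact Or.inr hm
  have hmono : Monotone (fun k => annC f ((Sf k)ᶜ)) :=
    monotone_nat_of_le_succ (fun k => annC_antitone f (by
      rw [hsucc k]
      exact Set.compl_subset_compl.2 Set.subset_union_left))
  obtain ⟨N, hN⟩ := hcc _ hmono (fun k => annC_adf f hf _)
  have heq : annC f ((Sf (N + 1))ᶜ) = annC f ((Sf N)ᶜ) := hN (N + 1) (Nat.le_succ N)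
  have hsub : (Sf (N + 1))ᶜ ⊆ (Sf N)ᶜ := by
    rw [hsucc N]
    exact Set.compl_subset_compl.2 Set.subset_union_left
  have hstr := nul_strict f hf hsub heq
  obtain ⟨P, hP, hSk⟩ := hinv N
  have hnn : ¬ nul f (Sf N)ᶜ := by rw [hSk]; exact hcon N P hP
  have hp := hpick' (Sf N) hnn
  refine hp.2.1 (nul_mono f ?_ hstr)
  intro i hi
  refine ⟨hp.1 hi, fun hc => hc ?_⟩
  rw [hsucc N]
  exact Set.mem_union_right _ hi

/-- The filter of sets whose complement intersect the atom `P` in a null set. -/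
def atomFilter (P : Set I) : Filter I where
  sets := {S | nul f (P \ S)}
  univ_sets := by
    have h : nul f (∅ : Set I) := nul_empty f
    have he : P \ Set.univ = ∅ := by simp
    show nul f (P \ Set.univ)
    rw [he]
    exact h
  sets_of_superset := fun {S T} hS hST =>
    nul_mono f (Set.diff_subset_diff_right hST) hS
  inter_sets := fun {S T} hS hT => by
    refine nul_mono f ?_ (nul_union f hS hT)
    intro i hi
    by_cases h : i ∈ S
    · exact Or.inr ⟨hi.1, fun hc => hi.2 ⟨h, hc⟩⟩
    · exact Or.inl ⟨hi.1, h⟩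

lemma mem_atomFilter {P S : Set I} : S ∈ atomFilter f P ↔ nul f (P \ S) := Iff.rfl

/-- The ultrafilter associated with an atom. -/
noncomputable def atomUF (P : Set I) (h1 : ¬ nul f P)
    (h2 : ∀ T, nul f (P ∩ T) ∨ nul f (P \ T)) : Ultrafilter I :=
  Ultrafilter.ofComplNotMemIff (atomFilter f P) (by
    intro S
    rw [mem_atomFilter, mem_atomFilter]
    have hd : P \ Sᶜ = P ∩ S := Set.diff_compl
    rw [hd]
    constructor
    · intro h
      rcases h2 S with h' | h'
      · exact absurd h' h
      · exact h'
    · intro h hc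
      refine h1 (nul_mono f ?_ (nul_union f hc h))
      intro i hi
      by_cases hs : i ∈ S
      · exact Or.inl ⟨hi, hs⟩
      · exact Or.inr ⟨hi, hs⟩)

lemma mem_atomUF {P S : Set I} {h1 : ¬ nul f P}
    {h2 : ∀ T, nul f (P ∩ T) ∨ nul f (P \ T)} :
    S ∈ (atomUF f P h1 h2 : Filter I) ↔ nul f (P \ S) := Iff.rfl

end Aux

/-- If `f : A = ∏ᵢ Aᵢ → B` is a surjective homomorphism of
(nonunital, nonassociative) algebras over a commutative unital ring `R`, and
`B` has chain condition on almost direct factors (every ascending chain of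
almost direct factors of `B` terminates), then there are finitely many
ultrafilters `U 0, …, U (n-1)` on `I` such that the composite
`A → B → B/Z(B)` factors through the natural map
`A → A/U 0 × … × A/U (n-1)`. -/
theorem composite_factors_of_chain_condition
    (R : Type u) [CommRing R] {I : Type u} (A : I → Type u)
    [∀ i, NonUnitalNonAssocRing (A i)] [∀ i, Module R (A i)]
    [∀ i, SMulCommClass R (A i) (A i)] [∀ i, IsScalarTower R (A i) (A i)]
    (B : Type u) [NonUnitalNonAssocRing B] [Module R B] [SMulCommClass R B B]
    [IsScalarTower R B B]
    (f : (∀ i, A i) →ₙₐ[R] B) (hf : Function.Surjective f)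
    (hcc : ∀ c : ℕ → Submodule R B, Monotone c →
      (∀ j, IsAlmostDirectFactor R B (c j)) → ∃ N, ∀ j ≥ N, c j = c N) :
    ∃ (n : ℕ) (U : Fin n → Ultrafilter I)
      (g : (∀ m, ReducedProduct (U m : Filter I) A) → B ⧸ totalAnnihilator R B),
      (fun a => Submodule.Quotient.mk (f a) :
          (∀ i, A i) → B ⧸ totalAnnihilator R B)
        = g ∘ fun (a : ∀ i, A i) (m : Fin n) => reducedMk (U m : Filter I) A a := by
  classical
  obtain ⟨n, P, hP, hcov⟩ := exists_atoms_cover f hf hcc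
  refine ⟨n, fun m => atomUF f (P m) (hP m).1 (hP m).2, ?_⟩
  have hft : Function.FactorsThrough
      (fun a => (Submodule.Quotient.mk (f a) : B ⧸ totalAnnihilator R B))
      (fun (a : ∀ i, A i) (m : Fin n) =>
        reducedMk ((atomUF f (P m) (hP m).1 (hP m).2 : Ultrafilter I) : Filter I) A a) := by
    intro a b hab
    have key : ∀ m : Fin n, nul f (P m \ {i | a i = b i}) := fun m =>
      (mem_atomUF f).1 (reducedMk_eq (congrFun hab m))
    have hT : nul f ({i | a i = b i}ᶜ) := by
      refine nul_mono f ?_ (nul_union f (nul_iUnion f n _ key) hcov)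
      intro i hi
      by_cases hm : ∃ m, i ∈ P m
      · obtain ⟨m, him⟩ := hm
        exact Or.inl (Set.mem_iUnion.2 ⟨m, him, hi⟩)
      · refine Or.inr ?_
        simp only [Set.mem_compl_iff, Set.mem_iUnion]
        exact fun ⟨m, hmm⟩ => hm ⟨m, hmm⟩
    have hmem : f a - f b ∈ totalAnnihilator R B := by
      rw [← map_sub]
      intro y
      refine hT (a - b) ?_ y
      intro i hi
      have h : a i = b i := not_not.1 hi
      show a i - b i = 0
      rw [h, sub_self]
    exact (Submodule.Quotient.eq _).2 hmem
  exact ⟨Function.extend _ (fun a => Submodule.Quotient.mk (f a)) (fun _ => 0),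
    funext fun a => (hft.extend_apply (fun _ => 0) a).symm⟩
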